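/- arXiv:1701.04509 — 8 statements merged into one kernel-verified Lean document; each statement's English description precedes it below -/
import Mathlib

section
/- Let I ⊆ S. If u, v ∈ U^I_min, ν = (ν_1, …, ν_N) ∈ ℕ^N, and Σ_{j=1}^N ν_j·a_j^+ = p·u − v (componentwise in ℤ^{n+2}), then ν_j ≤ p − 1 for all j ∈ {1, …, N}. -/
/-- `a_j⁺ = (a_{0j}, …, a_{nj}, 1) ∈ ℕ^{n+2}`. -/
def aplus {n N : ℕ} (a : Fin N → Fin (n + 1) → ℕ) (j : Fin N) : Fin (n + 2) → ℕ :=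
  Fin.snoc (a j) 1

/-- Lemma 2.1: if `u, v ∈ U^I_min`, `ν ∈ ℕ^N`, and
`∑ j ν_j a_j⁺ = p•u − v` componentwise in `ℤ^{n+2}`, then `ν_j ≤ p − 1` for all `j`. -/
theorem stmt_0 (p n N d : ℕ) (hp : p.Prime) (hn : 1 ≤ n) (hN : 1 ≤ N) (hd : 2 ≤ d)
    (a : Fin N → Fin (n + 1) → ℕ) (ha : ∀ j, ∑ i, a j i = d)
    (I : Finset (Fin (n + 1)))
    (u v : Fin (n + 2) → ℕ)
    (hu : (∑ i : Fin (n + 1), u i.castSucc = d * u (Fin.last (n + 1))) ∧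
      (∀ i ∈ I, 0 < u i.castSucc) ∧ u (Fin.last (n + 1)) = (I.card + d - 1) / d)
    (hv : (∑ i : Fin (n + 1), v i.castSucc = d * v (Fin.last (n + 1))) ∧
      (∀ i ∈ I, 0 < v i.castSucc) ∧ v (Fin.last (n + 1)) = (I.card + d - 1) / d)
    (ν : Fin N → ℕ)
    (hν : ∀ i : Fin (n + 2),
      ∑ j, (ν j : ℤ) * (aplus a j i : ℤ) = p * u i - v i) :
    ∀ j, ν j ≤ p - 1 := by
  intro j
  by_contra hj
  push_neg at hj
  have hp2 : 2 ≤ p := hp.two_le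
  have hpν : p ≤ ν j := by omega
  obtain ⟨hu1, hu2, hu3⟩ := hu
  obtain ⟨hv1, hv2, hv3⟩ := hv
  set m := (I.card + d - 1) / d with hm
  have hpz : (1 : ℤ) ≤ (p : ℤ) := by exact_mod_cast (by omega : 1 ≤ p)
  -- key inequality: v i ≤ p * (u i - a⁺ j i)
  have key : ∀ i : Fin (n + 2), (v i : ℤ) ≤ (p : ℤ) * ((u i : ℤ) - (aplus a j i : ℤ)) := by
    intro i
    have h1 : (ν j : ℤ) * (aplus a j i : ℤ) ≤ ∑ k, (ν k : ℤ) * (aplus a k i : ℤ) :=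
      Finset.single_le_sum (f := fun k => (ν k : ℤ) * (aplus a k i : ℤ))
        (fun k _ => by positivity) (Finset.mem_univ j)
    have h2 : (p : ℤ) * (aplus a j i : ℤ) ≤ (ν j : ℤ) * (aplus a j i : ℤ) :=
      mul_le_mul_of_nonneg_right (by exact_mod_cast hpν) (by positivity)
    rw [hν i] at h1
    linarith
  have hge : ∀ i : Fin (n + 2), (aplus a j i : ℤ) ≤ (u i : ℤ) := by
    intro i
    have h := key i
    have hv0 : (0 : ℤ) ≤ (v i : ℤ) := Nat.cast_nonneg _
    nlinarith
  -- m ≥ 1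
  have hlast : aplus a j (Fin.last (n + 1)) = 1 := Fin.snoc_last _ _
  have hm1 : 1 ≤ m := by
    have h := key (Fin.last (n + 1))
    rw [hlast, hu3, hv3] at h
    push_cast at h
    nlinarith
  -- strict inequality on I
  have hstrict : ∀ i ∈ I, (a j i : ℤ) + 1 ≤ (u i.castSucc : ℤ) := by
    intro i hi
    have h := key i.castSucc
    have hcs : aplus a j i.castSucc = a j i := Fin.snoc_castSucc _ _ _
    rw [hcs] at h
    have hv0 : (1 : ℤ) ≤ (v i.castSucc : ℤ) := by exact_mod_cast hv2 i hi
    nlinarith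
  -- sum bound
  have hsum : ∑ i : Fin (n + 1), ((u i.castSucc : ℤ) - (a j i : ℤ)) = d * m - d := by
    rw [Finset.sum_sub_distrib]
    have h1 : ∑ i : Fin (n + 1), (u i.castSucc : ℤ) = (d : ℤ) * m := by
      rw [← Nat.cast_sum]
      rw [hu1, hu3]
      push_cast
      ring
    have h2 : ∑ i : Fin (n + 1), (a j i : ℤ) = (d : ℤ) := by
      rw [← Nat.cast_sum, ha j]
    rw [h1, h2]
  have hlow : (I.card : ℤ) ≤ ∑ i : Fin (n + 1), ((u i.castSucc : ℤ) - (a j i : ℤ)) := by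
    calc (I.card : ℤ) = ∑ i ∈ I, (1 : ℤ) := by simp
      _ ≤ ∑ i ∈ I, ((u i.castSucc : ℤ) - (a j i : ℤ)) :=
          Finset.sum_le_sum (fun i hi => by linarith [hstrict i hi])
      _ ≤ ∑ i : Fin (n + 1), ((u i.castSucc : ℤ) - (a j i : ℤ)) := by
          apply Finset.sum_le_sum_of_subset_of_nonneg (Finset.subset_univ I)
          intro i _ _
          have hg := hge i.castSucc
          have hcs : aplus a j i.castSucc = a j i := Fin.snoc_castSucc _ _ _
          rw [hcs] at hg
          linarith
  have hcard : (I.card : ℤ) ≤ d * m - d := by rw [← hsum]; exact hlow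
  have hcardn : I.card + d ≤ d * m := by
    have : (I.card : ℤ) + d ≤ d * m := by linarith
    exact_mod_cast this
  have hcardn' : I.card + d ≤ m * d := by rw [mul_comm]; exact hcardn
  have hdiv : (I.card + d - 1) / d < m := by
    rw [Nat.div_lt_iff_lt_mul (by omega : 0 < d)]
    omega
  rw [← hm] at hdiv
  exact lt_irrefl m hdiv
end

section
/- If u, v ∈ U_min, ν = (ν_1, …, ν_N) ∈ ℕ^N, and Σ_{j=1}^N ν_j·a_j^+ = p·u − v (componentwise in ℤ^{n+2}), then ν_j ≤ p − 1 for all j ∈ {1, …, N}. -/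
/-- Lemma 1.3: if `u, v ∈ U_min`, `ν ∈ ℕ^N`, and
`∑ j ν_j a_j⁺ = p•u − v` componentwise in `ℤ^{n+2}`, then `ν_j ≤ p − 1` for all `j`.
Here `U = {u ∈ ℕ^{n+2} : ∑_{i=0}^n u_i = d u_{n+1}, u_i > 0 for all i}` and
`U_min = {u ∈ U : u_{n+1} = μ + 1}` with `μ + 1 = ⌈(n+1)/d⌉`. -/
theorem stmt_1 (p n N d : ℕ) (hp : p.Prime) (hn : 1 ≤ n) (hN : 1 ≤ N) (hd : 2 ≤ d)
    (a : Fin N → Fin (n + 1) → ℕ) (ha : ∀ j, ∑ i, a j i = d)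
    (u v : Fin (n + 2) → ℕ)
    (hu : (∑ i : Fin (n + 1), u i.castSucc = d * u (Fin.last (n + 1))) ∧
      (∀ i : Fin (n + 2), 0 < u i) ∧ u (Fin.last (n + 1)) = (n + 1 + d - 1) / d)
    (hv : (∑ i : Fin (n + 1), v i.castSucc = d * v (Fin.last (n + 1))) ∧
      (∀ i : Fin (n + 2), 0 < v i) ∧ v (Fin.last (n + 1)) = (n + 1 + d - 1) / d)
    (ν : Fin N → ℕ)
    (hν : ∀ i : Fin (n + 2),
      ∑ j, (ν j : ℤ) * (aplus a j i : ℤ) = p * u i - v i) :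
    ∀ j, ν j ≤ p - 1 := by
  intro j0
  by_contra hcon
  push_neg at hcon
  have hp2 := hp.two_le
  have hj0 : p ≤ ν j0 := by omega
  have key : ∀ i : Fin (n + 1), a j0 i + 1 ≤ u i.castSucc := by
    intro i
    have h1 := hν i.castSucc
    have h2 : (ν j0 : ℤ) * (aplus a j0 i.castSucc : ℤ) ≤
        ∑ j, (ν j : ℤ) * (aplus a j i.castSucc : ℤ) :=
      Finset.single_le_sum (f := fun j => (ν j : ℤ) * (aplus a j i.castSucc : ℤ))
        (fun j _ => by positivity) (Finset.mem_univ j0)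
    rw [h1] at h2
    have he : aplus a j0 i.castSucc = a j0 i := by simp [aplus]
    rw [he] at h2
    have hv' : (1 : ℤ) ≤ v i.castSucc := by exact_mod_cast hv.2.1 i.castSucc
    have hmul : (p : ℤ) * a j0 i ≤ (ν j0 : ℤ) * a j0 i := by
      have : (p : ℤ) ≤ ν j0 := by exact_mod_cast hj0
      exact mul_le_mul_of_nonneg_right this (by positivity)
    have hlt : (p : ℤ) * a j0 i < p * u i.castSucc := by linarith
    have hp0 : (0 : ℤ) < p := by exact_mod_cast hp.pos
    have : (a j0 i : ℤ) < u i.castSucc := lt_of_mul_lt_mul_left hlt (le_of_lt hp0)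
    have : a j0 i < u i.castSucc := by exact_mod_cast this
    omega
  have hsum : ∑ i : Fin (n + 1), (a j0 i + 1) ≤ ∑ i : Fin (n + 1), u i.castSucc :=
    Finset.sum_le_sum fun i _ => key i
  rw [Finset.sum_add_distrib, ha j0, hu.1, hu.2.2] at hsum
  simp only [Finset.sum_const, Finset.card_univ, Fintype.card_fin, smul_eq_mul, mul_one] at hsum
  have hdiv : (n + 1 + d - 1) / d * d ≤ n + 1 + d - 1 := Nat.div_mul_le_self _ _
  rw [Nat.mul_comm] at hdiv
  omega
end

section
/- Let I ⊆ S be nonempty, let u ∈ U^I_min, and let k ∈ {1, …, N}. Then there exists an index i_0 ∈ {0, …, n} such that a_{i_0 k} ≥ u_{i_0} if i_0 ∈ I, and a_{i_0 k} ≥ u_{i_0} + 1 if i_0 ∉ I. -/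
/-- claim (2.2) in the proof of Lemma 2.1: for nonempty `I ⊆ S`,
`u ∈ U^I_min` and `k ∈ {1, …, N}`, there is an index `i₀ ∈ {0, …, n}` with
`a_{i₀k} ≥ u_{i₀}` if `i₀ ∈ I` and `a_{i₀k} ≥ u_{i₀} + 1` if `i₀ ∉ I`. -/
theorem stmt_2 (p n N d : ℕ) (hp : p.Prime) (hn : 1 ≤ n) (hN : 1 ≤ N) (hd : 2 ≤ d)
    (a : Fin N → Fin (n + 1) → ℕ) (ha : ∀ j, ∑ i, a j i = d)
    (I : Finset (Fin (n + 1))) (hI : I.Nonempty)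
    (u : Fin (n + 2) → ℕ)
    (hu : (∑ i : Fin (n + 1), u i.castSucc = d * u (Fin.last (n + 1))) ∧
      (∀ i ∈ I, 0 < u i.castSucc) ∧ u (Fin.last (n + 1)) = (I.card + d - 1) / d)
    (k : Fin N) :
    ∃ i₀ : Fin (n + 1),
      (i₀ ∈ I → u i₀.castSucc ≤ a k i₀) ∧ (i₀ ∉ I → u i₀.castSucc + 1 ≤ a k i₀) := by
  obtain ⟨hsum, hpos, hlast⟩ := hu
  by_contra h
  push_neg at h
  -- From failure: for every i, a k i + (if i ∈ I then 1 else 0) ≤ u i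
  have key : ∀ i : Fin (n + 1), a k i + (if i ∈ I then 1 else 0) ≤ u i.castSucc := by
    intro i
    by_cases hi : i ∈ I
    · simp only [hi, if_true]
      by_cases hle : u i.castSucc ≤ a k i
      · exact absurd hi (h i (fun _ => hle)).1
      · omega
    · simp only [hi, if_false]
      by_cases hle : u i.castSucc ≤ a k i
      · have := (h i (fun hmem => absurd hmem hi)).2
        omega
      · omega
  have hsum2 : ∑ i : Fin (n + 1), (a k i + (if i ∈ I then 1 else 0)) ≤
      ∑ i : Fin (n + 1), u i.castSucc := Finset.sum_le_sum fun i _ => key i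
  rw [Finset.sum_add_distrib, ha k] at hsum2
  have hcard : ∑ i : Fin (n + 1), (if i ∈ I then 1 else 0) = I.card := by
    rw [Finset.sum_ite_mem, Finset.univ_inter, Finset.card_eq_sum_ones]
  rw [hcard, hsum, hlast] at hsum2
  have hdvd : d * ((I.card + d - 1) / d) ≤ I.card + d - 1 := Nat.mul_div_le _ d
  have hc1 : 1 ≤ I.card := Finset.card_pos.mpr hI
  omega
end

section
/- Let I ⊆ S and let u, v ∈ U^I_min. Then the polynomial A^I_{uv}(Λ) ∈ ℚ[Λ_1, …, Λ_N] defined by A^I_{uv}(Λ) = (−1)^{μ_I+1} Σ_ν (ν_1! ⋯ ν_N!)^{−1} Λ_1^{ν_1} ⋯ Λ_N^{ν_N}, where the (finite) sum is over all ν ∈ ℕ^N with Σ_{j=1}^N ν_j·a_j^+ = p·u − v, has all of its coefficients in the localization ℤ_{(p)} (i.e., every coefficient is a rational number with p-adic valuation ≥ 0). -/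
/-- for `u, v ∈ U^I_min`, the polynomial
`A^I_{uv}(Λ) = (−1)^{μ_I+1} ∑_{ν : ∑ ν_j a_j⁺ = pu−v} Λ^ν / (ν₁!⋯ν_N!) ∈ ℚ[Λ]`
has all its coefficients in `ℤ_(p)`, i.e. every nonzero coefficient has
`p`-adic valuation `≥ 0`. -/
theorem stmt_4 (p n N d : ℕ) (hp : p.Prime) (hn : 1 ≤ n) (hN : 1 ≤ N) (hd : 2 ≤ d)
    (a : Fin N → Fin (n + 1) → ℕ) (ha : ∀ j, ∑ i, a j i = d)
    (I : Finset (Fin (n + 1)))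
    (u v : Fin (n + 2) → ℕ)
    (hu : (∑ i : Fin (n + 1), u i.castSucc = d * u (Fin.last (n + 1))) ∧
      (∀ i ∈ I, 0 < u i.castSucc) ∧ u (Fin.last (n + 1)) = (I.card + d - 1) / d)
    (hv : (∑ i : Fin (n + 1), v i.castSucc = d * v (Fin.last (n + 1))) ∧
      (∀ i ∈ I, 0 < v i.castSucc) ∧ v (Fin.last (n + 1)) = (I.card + d - 1) / d)
    (A : MvPolynomial (Fin N) ℚ)
    (hA : ∀ m : Fin N →₀ ℕ, A.coeff m =
      if ∀ i : Fin (n + 2), ∑ j, (m j : ℤ) * (aplus a j i : ℤ) = p * u i - v i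
      then (-1) ^ ((I.card + d - 1) / d) / ∏ j, ((m j).factorial : ℚ)
      else 0) :
    ∀ m : Fin N →₀ ℕ, A.coeff m ≠ 0 → 0 ≤ padicValRat p (A.coeff m) := by
  haveI : Fact p.Prime := ⟨hp⟩
  intro m hm
  rw [hA] at hm ⊢
  by_cases h : ∀ i : Fin (n + 2), ∑ j, (m j : ℤ) * (aplus a j i : ℤ) = p * u i - v i
  · rw [if_pos h]
    -- every m j < p
    have hlt : ∀ j, m j < p := by
      intro j
      by_contra hj
      push_neg at hj
      -- pointwise inequality on the first n+1 coordinates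
      have key : ∀ i : Fin (n + 1), (v i.castSucc : ℤ) + p * a j i ≤ p * u i.castSucc := by
        intro i
        have h1 : (m j : ℤ) * (aplus a j i.castSucc : ℤ)
            ≤ ∑ j', (m j' : ℤ) * (aplus a j' i.castSucc : ℤ) :=
          Finset.single_le_sum (f := fun j' => (m j' : ℤ) * (aplus a j' i.castSucc : ℤ))
            (fun j' _ => by positivity) (Finset.mem_univ j)
        have h2 := h i.castSucc
        have h3 : (aplus a j i.castSucc : ℤ) = (a j i : ℤ) := by
          simp [aplus, Fin.snoc_castSucc]
        rw [h2, h3] at h1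
        nlinarith [(Nat.cast_le.2 hj : (p : ℤ) ≤ (m j : ℤ)),
          (by positivity : (0 : ℤ) ≤ (a j i : ℤ))]
      have hge : ∀ i : Fin (n + 1), a j i + (if i ∈ I then 1 else 0) ≤ u i.castSucc := by
        intro i
        have hk := key i
        by_cases hi : i ∈ I
        · have hvpos := hv.2.1 i hi
          simp only [hi, if_pos]
          have hvz : (1 : ℤ) ≤ v i.castSucc := by exact_mod_cast hvpos
          have hppos : (0 : ℤ) < p := by exact_mod_cast hp.pos
          have hlt' : (a j i : ℤ) < u i.castSucc :=
            lt_of_mul_lt_mul_left (by linarith) hppos.le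
          exact_mod_cast hlt'
        · simp only [hi, if_neg, not_false_iff, add_zero]
          have hvz : (0 : ℤ) ≤ v i.castSucc := by positivity
          have : (p : ℤ) * a j i ≤ p * u i.castSucc := by linarith
          have hppos : (0 : ℤ) < p := by exact_mod_cast hp.pos
          exact_mod_cast le_of_mul_le_mul_left this hppos
      have hsum : ∑ i : Fin (n+1), (a j i + (if i ∈ I then 1 else 0)) ≤ ∑ i : Fin (n+1), u i.castSucc :=
        Finset.sum_le_sum fun i _ => hge i
      rw [Finset.sum_add_distrib, ha j, hu.1, hu.2.2] at hsum
      have hcard : ∑ i : Fin (n+1), (if i ∈ I then 1 else 0) = I.card := by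
        rw [Finset.sum_ite_mem, Finset.univ_inter, ← Finset.card_eq_sum_ones]
      rw [hcard] at hsum
      have hdiv : d * ((I.card + d - 1) / d) ≤ I.card + d - 1 := Nat.mul_div_le _ _
      omega
    -- valuation computation
    have hprod : ¬ (p : ℚ) = 0 := by exact_mod_cast hp.ne_zero
    set c : ℕ := ∏ j, (m j).factorial with hc
    have hcast : (∏ j, ((m j).factorial : ℚ)) = (c : ℚ) := by push_cast [hc]; ring
    have hcnd : ¬ p ∣ c := by
      intro hdvd
      obtain ⟨j, -, hj⟩ := (hp.prime.dvd_finset_prod_iff _).1 hdvd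
      exact absurd (Nat.Prime.dvd_factorial hp |>.1 hj) (Nat.not_le.2 (hlt j))
    have hcval : padicValRat p (c : ℚ) = 0 := by
      rw [padicValRat.of_nat, padicValNat.eq_zero_of_not_dvd hcnd]; rfl
    have hcne : (c : ℚ) ≠ 0 :=
      Nat.cast_ne_zero.2 (fun h0 => hcnd (h0 ▸ dvd_zero p))
    rw [hcast]
    rcases Nat.even_or_odd ((I.card + d - 1) / d) with he | he
    · rw [he.neg_one_pow, one_div, padicValRat.inv, hcval]; norm_num
    · rw [he.neg_one_pow, div_eq_mul_inv, neg_one_mul, padicValRat.neg, padicValRat.inv, hcval]; norm_num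
  · rw [if_neg h] at hm; exact absurd rfl hm
end

section
/- Let I ⊆ S and u, v ∈ U^I_min. Then the polynomial Ā^I_{uv}(Λ) ∈ 𝔽_p[Λ_1, …, Λ_N] satisfies every box operator of the A-hypergeometric system: for each l = (l_1, …, l_N) ∈ ℤ^N with Σ_{j=1}^N l_j·a_j^+ = 0, one has Π_{j : l_j > 0} (∂/∂Λ_j)^{l_j} Ā^I_{uv} = Π_{j : l_j < 0} (∂/∂Λ_j)^{−l_j} Ā^I_{uv} in 𝔽_p[Λ_1, …, Λ_N]. -/
/-!
Write `Ā = c ∑_ν Λ^ν / ν!` with `c = (-1)^{μ_I+1}`, the sum running over the solutions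
`ν ∈ ℕ^N` of `∑_j ν_j a_j⁺ = p u - v` with `ν_j < p`. The truncation `ν_j < p` is vacuous: if
`ν_j ≥ p`, then comparing coordinates shows that `u - a_j⁺` still lies in `U^I`, against the
minimality of the last coordinate of `u`. So `Ā` behaves like an untruncated exponential
series, and `∏_j ∂_j^{k_j}` sends the coefficient `c / (m + k)!` of `Λ^{m+k}` to `c / m!` at
`Λ^m`. Thus the coefficient of `Λ^m` in `∂^k Ā` is `c / m!` or `0` according as `m + k` solves
the equation, and for `k = l⁺`, `k = l⁻` these conditions agree because `∑_j l_j a_j⁺ = 0`.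
-/

open MvPolynomial

/-- The differential operator `∏_j (∂/∂Λ_j)^{k_j}` (the partial derivatives commute,
so the order of composition is immaterial). -/
noncomputable def iterPderiv {N p : ℕ} (k : Fin N → ℕ) (P : MvPolynomial (Fin N) (ZMod p)) :
    MvPolynomial (Fin N) (ZMod p) :=
  (List.finRange N).foldl (fun Q j => (fun R => pderiv j R)^[k j] Q) P

open Finset Finsupp Nat

namespace MvPolynomial

variable {R σ : Type*} [CommSemiring R]

theorem coeff_iterate_pderiv (i : σ) (t : ℕ) (P : MvPolynomial σ R) (m : σ →₀ ℕ) :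
    coeff m ((fun Q => pderiv i Q)^[t] P) =
      coeff (m + single i t) P * ((m i + t).descFactorial t : ℕ) := by
  induction t generalizing P with
  | zero => simp
  | succ t ih =>
    rw [Function.iterate_succ_apply, ih, coeff_pderiv, add_assoc, ← single_add,
      Finsupp.add_apply, single_eq_same, ← add_assoc, succ_descFactorial_succ]
    push_cast
    ring

theorem coeff_foldl_iterate_pderiv [DecidableEq σ] (k : σ → ℕ) {L : List σ} (hL : L.Nodup)
    (P : MvPolynomial σ R) (m : σ →₀ ℕ) :
    coeff m (L.foldl (fun Q j => (fun Q' => pderiv j Q')^[k j] Q) P) =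
      coeff (m + ∑ j ∈ L.toFinset, single j (k j)) P *
        ∏ j ∈ L.toFinset, ((m j + k j).descFactorial (k j) : R) := by
  induction L generalizing P with
  | nil => simp
  | cons j L ih =>
    obtain ⟨hjL, hL⟩ := List.nodup_cons.1 hL
    have hj : j ∉ L.toFinset := by simpa using hjL
    have hshift : (m + ∑ i ∈ L.toFinset, single i (k i)) j = m j := by
      simp [single_apply, hjL]
    rw [List.foldl_cons, ih hL, coeff_iterate_pderiv, hshift, List.toFinset_cons,
      sum_insert hj, prod_insert hj, mul_assoc, add_assoc, add_comm (single j (k j))]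

end MvPolynomial

theorem coeff_iterPderiv {N p : ℕ} (k : Fin N → ℕ) (P : MvPolynomial (Fin N) (ZMod p))
    (m : Fin N →₀ ℕ) :
    coeff m (iterPderiv k P) =
      coeff (m + ∑ j, single j (k j)) P * ∏ j, ((m j + k j).descFactorial (k j) : ZMod p) := by
  simpa [iterPderiv, List.toFinset_finRange] using
    coeff_foldl_iterate_pderiv k (List.nodup_finRange N) P m

theorem Nat.cast_descFactorial_mul_inv_factorial {K : Type*} [Field K] (n k : ℕ)
    (h : ((n + k)! : K) ≠ 0) :
    ((n + k).descFactorial k : K) * ((n + k)! : K)⁻¹ = (n ! : K)⁻¹ := by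
  have hfac : (n ! : K) * (n + k).descFactorial k = (n + k)! := by
    have := factorial_mul_descFactorial (le_add_self : k ≤ n + k)
    rw [Nat.add_sub_cancel] at this
    rw [← this, Nat.cast_mul]
  rw [← hfac] at h ⊢
  rw [mul_inv, mul_left_comm, mul_inv_cancel₀ (right_ne_zero_of_mul h), mul_one]

theorem coeff_iterPderiv_eq_ite {N p : ℕ} [Fact p.Prime] (C : (Fin N →₀ ℕ) → Prop)
    [DecidablePred C] (hC : ∀ m, C m → ∀ j, m j < p) (c : ZMod p)
    (P : MvPolynomial (Fin N) (ZMod p))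
    (hP : ∀ m, coeff m P = if C m then c * (∏ j, ((m j)! : ZMod p))⁻¹ else 0)
    (k : Fin N → ℕ) (m : Fin N →₀ ℕ) :
    coeff m (iterPderiv k P) =
      if C (m + ∑ j, single j (k j)) then c * (∏ j, ((m j)! : ZMod p))⁻¹ else 0 := by
  rw [coeff_iterPderiv, hP]
  split_ifs with h
  · have hlt : ∀ j, m j + k j < p := by
      simpa only [Finsupp.add_apply, coe_univ_sum_single] using hC _ h
    simp only [Finsupp.add_apply, coe_univ_sum_single, mul_assoc, ← prod_inv_distrib,
      ← prod_mul_distrib]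
    congr 1
    refine prod_congr rfl fun j _ => ?_
    rw [mul_comm, Nat.cast_descFactorial_mul_inv_factorial]
    exact (ZMod.natCast_eq_zero_iff _ _).not.2 fun hdvd =>
      (hlt j).not_ge ((Fact.out : p.Prime).dvd_factorial.1 hdvd)
  · simp

theorem lt_of_sum_mul_aplus_eq {p n N d : ℕ} (hp : 0 < p) (hd : 0 < d)
    {a : Fin N → Fin (n + 1) → ℕ} (ha : ∀ j, ∑ i, a j i = d) {I : Finset (Fin (n + 1))}
    {u v : Fin (n + 2) → ℕ}
    (hu_sum : ∑ i : Fin (n + 1), u i.castSucc = d * u (Fin.last (n + 1)))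
    (hu_last : u (Fin.last (n + 1)) = (I.card + d - 1) / d)
    (hv : ∀ i ∈ I, 0 < v i.castSucc) {w : Fin N → ℕ}
    (hw : ∀ i, ∑ j, (w j : ℤ) * aplus a j i = p * u i - v i) (j : Fin N) :
    w j < p := by
  by_contra! hwj
  have hcoord (i : Fin (n + 1)) : a j i + (if i ∈ I then 1 else 0) ≤ u i.castSucc := by
    have hwi := hw i.castSucc
    simp only [aplus, Fin.snoc_castSucc] at hwi
    have hterm : (w j : ℤ) * a j i ≤ ∑ j', (w j' : ℤ) * a j' i :=
      single_le_sum (f := fun j' => (w j' : ℤ) * a j' i) (fun _ _ => by positivity) (mem_univ j)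
    have hpw : p * a j i ≤ w j * a j i := Nat.mul_le_mul_right _ hwj
    have hle : p * a j i + v i.castSucc ≤ p * u i.castSucc := by zify at hpw ⊢; linarith
    split_ifs with hi
    · exact Nat.lt_of_mul_lt_mul_left (a := p) (by have := hv i hi; omega)
    · rw [add_zero]
      exact Nat.le_of_mul_le_mul_left (by omega) hp
  -- `u - a_j⁺` would lie in `U^I` with last coordinate `μ_I`, below the minimum `⌈|I|/d⌉`.
  have hsum : d + I.card ≤ d * ((I.card + d - 1) / d) :=
    calc d + I.card = ∑ i, (a j i + if i ∈ I then 1 else 0) := by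
          rw [sum_add_distrib, ha, sum_boole, filter_mem_eq_inter, univ_inter, Nat.cast_id]
      _ ≤ ∑ i, u i.castSucc := sum_le_sum fun i _ => hcoord i
      _ = _ := by rw [hu_sum, hu_last]
  have := Nat.mul_div_le (I.card + d - 1) d
  omega

theorem sum_add_toNat_mul_eq_sum_add_toNat_neg_mul {ι : Type*} [Fintype ι] (m : ι → ℕ)
    (l b : ι → ℤ) (hl : ∑ j, l j * b j = 0) :
    ∑ j, ((m j + (l j).toNat : ℕ) : ℤ) * b j = ∑ j, ((m j + (-l j).toNat : ℕ) : ℤ) * b j := by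
  rw [← sub_eq_zero, ← sum_sub_distrib, ← hl]
  refine sum_congr rfl fun j _ => ?_
  push_cast
  linear_combination b j * (l j).toNat_sub_toNat_neg

theorem stmt_7_general (p n N d : ℕ) (hp : p.Prime) (hd : 2 ≤ d)
    (a : Fin N → Fin (n + 1) → ℕ) (ha : ∀ j, ∑ i, a j i = d)
    (I : Finset (Fin (n + 1)))
    (u v : Fin (n + 2) → ℕ)
    (hu : (∑ i : Fin (n + 1), u i.castSucc = d * u (Fin.last (n + 1))) ∧
      (∀ i ∈ I, 0 < u i.castSucc) ∧ u (Fin.last (n + 1)) = (I.card + d - 1) / d)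
    (hv : (∑ i : Fin (n + 1), v i.castSucc = d * v (Fin.last (n + 1))) ∧
      (∀ i ∈ I, 0 < v i.castSucc) ∧ v (Fin.last (n + 1)) = (I.card + d - 1) / d)
    (A : MvPolynomial (Fin N) (ZMod p))
    (hA : ∀ m : Fin N →₀ ℕ, A.coeff m =
      if (∀ j, m j ≤ p - 1) ∧
          (∀ i : Fin (n + 2), ∑ j, (m j : ℤ) * (aplus a j i : ℤ) = p * u i - v i)
      then (-1) ^ ((I.card + d - 1) / d) * (∏ j, ((m j).factorial : ZMod p))⁻¹
      else 0) :
    ∀ l : Fin N → ℤ, (∀ i : Fin (n + 2), ∑ j, l j * (aplus a j i : ℤ) = 0) →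
      iterPderiv (fun j => (l j).toNat) A = iterPderiv (fun j => (-l j).toNat) A := by
  intro l hl
  have : Fact p.Prime := ⟨hp⟩
  let C (m : Fin N →₀ ℕ) : Prop := ∀ i, ∑ j, (m j : ℤ) * aplus a j i = p * u i - v i
  have hC (m) (hm : C m) : ∀ j, m j < p :=
    lt_of_sum_mul_aplus_eq hp.pos (by omega) ha hu.1 hu.2.2 hv.2.1 hm
  have hA' (m) : A.coeff m = if C m then
      (-1) ^ ((I.card + d - 1) / d) * (∏ j, ((m j)! : ZMod p))⁻¹ else 0 := by
    rw [hA]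
    exact if_congr ⟨And.right, fun hm => ⟨fun j => le_sub_one_of_lt (hC m hm j), hm⟩⟩ rfl rfl
  ext m
  rw [coeff_iterPderiv_eq_ite C hC _ A hA', coeff_iterPderiv_eq_ite C hC _ A hA']
  refine if_congr ?_ rfl rfl
  simp only [C, Finsupp.add_apply, coe_univ_sum_single,
    sum_add_toNat_mul_eq_sum_add_toNat_neg_mul _ l _ (hl _)]

/-- the mod-`p` polynomial `Ā^I_{uv}(Λ) ∈ 𝔽_p[Λ₁, …, Λ_N]` satisfies every
box operator of the `A`-hypergeometric system: for each `l ∈ ℤ^N` with `∑_j l_j a_j⁺ = 0`,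
`∏_{l_j > 0} (∂/∂Λ_j)^{l_j} Ā = ∏_{l_j < 0} (∂/∂Λ_j)^{−l_j} Ā`. -/
theorem stmt_7 (p n N d : ℕ) (hp : p.Prime) (hn : 1 ≤ n) (hN : 1 ≤ N) (hd : 2 ≤ d)
    (a : Fin N → Fin (n + 1) → ℕ) (ha : ∀ j, ∑ i, a j i = d)
    (I : Finset (Fin (n + 1)))
    (u v : Fin (n + 2) → ℕ)
    (hu : (∑ i : Fin (n + 1), u i.castSucc = d * u (Fin.last (n + 1))) ∧
      (∀ i ∈ I, 0 < u i.castSucc) ∧ u (Fin.last (n + 1)) = (I.card + d - 1) / d)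
    (hv : (∑ i : Fin (n + 1), v i.castSucc = d * v (Fin.last (n + 1))) ∧
      (∀ i ∈ I, 0 < v i.castSucc) ∧ v (Fin.last (n + 1)) = (I.card + d - 1) / d)
    (A : MvPolynomial (Fin N) (ZMod p))
    (hA : ∀ m : Fin N →₀ ℕ, A.coeff m =
      if (∀ j, m j ≤ p - 1) ∧
          (∀ i : Fin (n + 2), ∑ j, (m j : ℤ) * (aplus a j i : ℤ) = p * u i - v i)
      then (-1) ^ ((I.card + d - 1) / d) * (∏ j, ((m j).factorial : ZMod p))⁻¹
      else 0) :
    ∀ l : Fin N → ℤ, (∀ i : Fin (n + 2), ∑ j, l j * (aplus a j i : ℤ) = 0) →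
      iterPderiv (fun j => (l j).toNat) A = iterPderiv (fun j => (-l j).toNat) A :=
  stmt_7_general p n N d hp hd a ha I u v hu hv A hA
end

section
/- Assume Hypothesis 7.1 holds for the subset I ⊆ S. Then the determinant of the m × m matrix Ā^I(Λ) = [Ā^I_{uv}(Λ)]_{u,v ∈ U^I_min} is a nonzero polynomial in 𝔽_p[Λ_1, …, Λ_N]; in particular the matrix Ā^I(Λ) is invertible over the field of rational functions 𝔽_p(Λ_1, …, Λ_N). -/
/-!
Write `q = p - 1`, let `u_c = a⁺_{μ+κ c} + ∑_{t<μ} a⁺_t` run over `U^I_min`, and look at the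
coefficient in `det Ā^I` of `Λ^{∑_c ν_c}`, where `Λ^{ν_c} = Λ_{μ+κ c}^q ∏_{t<μ} Λ_t^q` is a
monomial of `Ā_{u_c u_c}`. If `∏_c Ā_{u_{σ c} u_c}` contributes to it through monomials
`Λ^{g_c}`, the column sums and the bound `g_c ≤ q` force `g_c = ν_c` outside the variables
`Λ_{μ+s}`; what remains is `∑_s β_{cs} a⁺_{μ+s} + a⁺_{μ+κ c} = p a⁺_{μ+κ σ c}` with a matrix `β`
whose rows and columns all sum to `q`. Order the vectors `a⁺_{μ+s}` lexicographically: the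
equation with the largest right-hand side expresses it as an average of no larger vectors, so
all of them are equal to it; this fixes one row and one column of `β`, and descending induction
gives `σ = 1` and `g = ν`. Hence the coefficient is `∏_c coeff_{ν_c} Ā_{u_c u_c} ≠ 0`.
-/

open MvPolynomial

open Finset Function

theorem forall_intCast_sum_mul_eq_sub_iff {ι ι' : Type*} [Fintype ι] (x : ι → ι' → ℕ)
    (e : ι → ℕ) (u v : ι' → ℕ) (p : ℕ) :
    (∀ i, ∑ j, (e j : ℤ) * (x j i : ℤ) = p * u i - v i) ↔ ∑ j, e j • x j + v = p • u := by
  rw [funext_iff]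
  refine forall_congr' fun i => ?_
  simp only [eq_sub_iff_add_eq, Pi.add_apply, Finset.sum_apply, Pi.smul_apply, smul_eq_mul]
  norm_cast

theorem ZMod.natCast_factorial_ne_zero {p k : ℕ} (hp : p.Prime) (hk : k < p) :
    (k.factorial : ZMod p) ≠ 0 := by
  rw [Ne, ZMod.natCast_eq_zero_iff, hp.dvd_factorial]
  omega

theorem MvPolynomial.coeff_prod {ι σ R : Type*} [CommSemiring R] [DecidableEq ι] [DecidableEq σ]
    (f : ι → MvPolynomial σ R) (d : σ →₀ ℕ) (s : Finset ι) :
    coeff d (∏ j ∈ s, f j) = ∑ l ∈ s.finsuppAntidiag d, ∏ i ∈ s, coeff (l i) (f i) := by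
  simp only [← coeff_coe, ← coeToMvPowerSeries.ringHom_apply, map_prod,
    MvPowerSeries.coeff_prod]

theorem Matrix.coeff_det_eq_prod_of_unique {ι σ R : Type*} [Fintype ι] [DecidableEq ι]
    [DecidableEq σ] [CommRing R] (M : Matrix ι ι (MvPolynomial σ R)) (ν : ι → σ →₀ ℕ)
    (huniq : ∀ (π : Equiv.Perm ι) (g : ι → σ →₀ ℕ), ∑ c, g c = ∑ c, ν c →
      (∀ c, coeff (g c) (M (π c) c) ≠ 0) → π = 1 ∧ g = ν) :
    coeff (∑ c, ν c) M.det = ∏ c, coeff (ν c) (M c c) := by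
  have hterm : ∀ π : Equiv.Perm ι, coeff (∑ c, ν c) (∏ c, M (π c) c) =
      if π = 1 then ∏ c, coeff (ν c) (M c c) else 0 := by
    intro π
    have key : ∀ l ∈ univ.finsuppAntidiag (∑ c, ν c), ∏ c, coeff (l c) (M (π c) c) ≠ 0 →
        π = 1 ∧ ⇑l = ν := fun l hl hne =>
      huniq π l (mem_finsuppAntidiag.1 hl).1 fun c h0 => hne (prod_eq_zero (mem_univ c) h0)
    rw [coeff_prod]
    split_ifs with hπ
    · subst hπ
      have hν : Finsupp.equivFunOnFinite.symm ν ∈ univ.finsuppAntidiag (∑ c, ν c) := by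
        simp [mem_finsuppAntidiag]
      rw [sum_eq_single _ (fun l hl hlν => by_contra fun hne => hlν ?_) (absurd hν)]
      · rfl
      · exact DFunLike.coe_injective (key l hl hne).2
    · exact sum_eq_zero fun l hl => by_contra fun hne => hπ (key l hl hne).1
  rw [Matrix.det_apply, coeff_sum, sum_eq_single 1 (fun π _ hπ => ?_) (by simp)]
  · rw [Units.smul_def, coeff_smul, hterm, if_pos rfl]
    simp
  · rw [Units.smul_def, coeff_smul, hterm, if_neg hπ, smul_zero]

section Averaging

variable {ι M : Type*} [Fintype ι] [AddCommMonoid M] [LinearOrder M] [IsOrderedCancelAddMonoid M]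

theorem eq_of_sum_nsmul_add_eq_succ_nsmul {β : ι → ℕ} {v : ι → M} {x y : M} {q : ℕ}
    (hβ : ∑ s, β s = q) (hx : x ≤ y) (hβv : ∀ s, y < v s → β s = 0)
    (h : ∑ s, β s • v s + x = (q + 1) • y) : x = y ∧ ∀ s, β s ≠ 0 → v s = y := by
  have hle : ∀ s ∈ univ, β s • v s ≤ β s • y := fun s _ => by
    rcases le_or_gt (v s) y with hs | hs
    · exact nsmul_le_nsmul_right hs _
    · simp [hβv s hs]
  rw [succ_nsmul, ← hβ, sum_smul] at h
  obtain ⟨hsum, hxy⟩ := (add_eq_add_iff_eq_and_eq (sum_le_sum hle) hx).1 h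
  exact ⟨hxy, fun s hs => (_root_.nsmul_right_strictMono hs).injective
    ((sum_eq_sum_iff_of_le hle).1 hsum s (mem_univ s))⟩

theorem eq_and_eq_zero_of_sum_nsmul_add_eq_succ_nsmul {v : ι → M} (hv : Injective v)
    {θ π : ι → ι} (hθ : Surjective θ) (hπ : Injective π) {β : ι → ι → ℕ} {q : ℕ}
    (hrow : ∀ c, ∑ s, β c s = q) (hcol : ∀ s, ∑ c, β c s = q)
    (h : ∀ c, ∑ s, β c s • v s + v (π c) = (q + 1) • v (θ c)) (c : ι) :
    π c = θ c ∧ ∀ s ≠ θ c, β c s = 0 := by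
  classical
  -- descending induction on `v (θ c)`
  induction hk : #{s | v (θ c) < v s} using Nat.strong_induction_on generalizing c with
  | _ k ih =>
  have IH : ∀ c', v (θ c) < v (θ c') → π c' = θ c' ∧ ∀ s ≠ θ c', β c' s = 0 := by
    refine fun c' hc' => ih _ (hk ▸ card_lt_card ?_) c' rfl
    refine ssubset_iff_of_subset (fun s hs => ?_) |>.2 ⟨θ c', ?_⟩
    · simp only [mem_filter, mem_univ, true_and] at hs ⊢
      exact hc'.trans hs
    · simp [hc']
  have hzero : ∀ s, v (θ c) < v s → β c s = 0 := by
    intro s hs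
    obtain ⟨c', rfl⟩ := hθ s
    have hc' : β c' (θ c') = q := by
      rw [← hrow c', sum_eq_single (θ c') (fun s _ => (IH c' hs).2 s) (by simp)]
    have hne : c ≠ c' := by rintro rfl; exact hs.false
    have := sum_le_sum_of_subset (f := fun x => β x (θ c')) (subset_univ {c, c'})
    rw [sum_pair hne, hcol, hc'] at this
    omega
  have hπ_le : v (π c) ≤ v (θ c) := by
    by_contra! hlt
    obtain ⟨c', hc'⟩ := hθ (π c)
    have hcc : c' = c := hπ ((IH c' (hc' ▸ hlt)).1.trans hc')
    rw [← hc', hcc] at hlt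
    exact hlt.false
  obtain ⟨hπc, hβ⟩ := eq_of_sum_nsmul_add_eq_succ_nsmul (hrow c) hπ_le hzero (h c)
  exact ⟨hv hπc, fun s hs => by_contra fun h0 => hs (hv (hβ s h0))⟩

end Averaging

section Blocks

variable {N μ m : ℕ} (h : μ + m ≤ N)

-- Under Hypothesis 7.1 the variables `Λ_t`, `t < μ`, occur in the decomposition of every
-- `u ∈ U^I_min`, and `Λ_{μ+s}` in exactly one.
def sharedVar (t : Fin μ) : Fin N := Fin.castLE h (Fin.castAdd m t)

def ownVar (s : Fin m) : Fin N := Fin.castLE h (Fin.natAdd μ s)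

theorem sum_eq_sum_sharedVar_add_sum_ownVar {M : Type*} [AddCommMonoid M] (F : Fin N → M)
    (hF : ∀ j : Fin N, μ + m ≤ (j : ℕ) → F j = 0) :
    ∑ j, F j = ∑ t, F (sharedVar h t) + ∑ s, F (ownVar h s) := by
  obtain ⟨r, rfl⟩ := Nat.exists_eq_add_of_le h
  rw [Fin.sum_univ_add, Fin.sum_univ_add (fun j => F (Fin.castAdd r j)),
    Fintype.sum_eq_zero (fun j => F (Fin.natAdd (μ + m) j)) fun j => hF _ (by simp), add_zero]
  rfl

theorem sharedVar_or_ownVar_or_le (j : Fin N) :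
    (∃ t, sharedVar h t = j) ∨ (∃ s, ownVar h s = j) ∨ μ + m ≤ (j : ℕ) := by
  rcases lt_or_ge (j : ℕ) μ with hj | hj
  · exact .inl ⟨⟨j, hj⟩, rfl⟩
  rcases lt_or_ge (j : ℕ) (μ + m) with hj' | hj'
  · exact .inr (.inl ⟨⟨j - μ, by omega⟩, Fin.ext (by simp [ownVar]; omega)⟩)
  · exact .inr (.inr hj')

def diagExponent (μ q : ℕ) {m N : ℕ} (s : Fin m) (j : Fin N) : ℕ :=
  if (j : ℕ) < μ ∨ (j : ℕ) = μ + s then q else 0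

@[simp]
theorem diagExponent_sharedVar (q : ℕ) (s : Fin m) (t : Fin μ) :
    diagExponent μ q s (sharedVar h t) = q := by
  simp [diagExponent, sharedVar]

@[simp]
theorem diagExponent_ownVar (q : ℕ) (s s' : Fin m) :
    diagExponent μ q s (ownVar h s') = if s' = s then q else 0 := by
  simp [diagExponent, ownVar, Fin.ext_iff]

theorem diagExponent_of_le {q : ℕ} {s : Fin m} {j : Fin N} (hj : μ + m ≤ (j : ℕ)) :
    diagExponent μ q s j = 0 := by
  simp only [diagExponent]
  split_ifs <;> omega

theorem sum_nsmul_eq_nsmul_add_sum_ownVar {V : Type*} [AddCommMonoid V] (x : Fin N → V)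
    {e : Fin N → ℕ} {q : ℕ} (hshared : ∀ t, e (sharedVar h t) = q)
    (hbeyond : ∀ j : Fin N, μ + m ≤ (j : ℕ) → e j = 0) :
    ∑ j, e j • x j = q • ∑ t, x (sharedVar h t) + ∑ s, e (ownVar h s) • x (ownVar h s) := by
  rw [sum_eq_sum_sharedVar_add_sum_ownVar h _ fun j hj => by rw [hbeyond j hj, zero_smul],
    smul_sum]
  simp only [hshared]

theorem sum_diagExponent_nsmul {V : Type*} [AddCommMonoid V] (x : Fin N → V) (q : ℕ)
    (s : Fin m) :
    ∑ j, diagExponent μ q s j • x j = q • (x (ownVar h s) + ∑ t, x (sharedVar h t)) := by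
  rw [sum_nsmul_eq_nsmul_add_sum_ownVar h x (diagExponent_sharedVar h q s)
    fun j hj => diagExponent_of_le hj]
  simp [ite_smul, smul_add, add_comm]

theorem sum_ownVar_nsmul_add_eq_succ_nsmul {V : Type*} [AddCancelCommMonoid V] (x : Fin N → V)
    {e : Fin N → ℕ} {q : ℕ} (hshared : ∀ t, e (sharedVar h t) = q)
    (hbeyond : ∀ j : Fin N, μ + m ≤ (j : ℕ) → e j = 0) {s s' : Fin m}
    (he : ∑ j, e j • x j + (x (ownVar h s') + ∑ t, x (sharedVar h t)) =
      (q + 1) • (x (ownVar h s) + ∑ t, x (sharedVar h t))) :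
    ∑ r, e (ownVar h r) • x (ownVar h r) + x (ownVar h s') = (q + 1) • x (ownVar h s) := by
  rw [sum_nsmul_eq_nsmul_add_sum_ownVar h x hshared hbeyond] at he
  apply add_right_cancel (b := (q + 1) • ∑ t, x (sharedVar h t))
  rw [← smul_add, ← he, succ_nsmul]
  abel

end Blocks

-- The exponents of the monomials of `Ā_{uv}`, with `v` moved across to avoid subtraction in `ℕ`.
def IsSupportExponent {n N : ℕ} (p : ℕ) (a : Fin N → Fin (n + 1) → ℕ) (u v : Fin (n + 2) → ℕ)
    (e : Fin N → ℕ) : Prop :=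
  (∀ j, e j ≤ p - 1) ∧ ∑ j, e j • aplus a j + v = p • u

@[simp]
theorem aplus_last {n N : ℕ} (a : Fin N → Fin (n + 1) → ℕ) (j : Fin N) :
    aplus a j (Fin.last (n + 1)) = 1 := by
  simp [aplus]

section Uniqueness

variable {p n N μ m : ℕ} {a : Fin N → Fin (n + 1) → ℕ} {h : μ + m ≤ N}
  {umin : Fin m → Fin (n + 2) → ℕ} {κ : Fin m → Fin m}

theorem isSupportExponent_diagExponent (hp : 0 < p)
    (hu : ∀ r, umin r = aplus a (ownVar h (κ r)) + ∑ t, aplus a (sharedVar h t)) (c : Fin m) :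
    IsSupportExponent p a (umin c) (umin c) (diagExponent μ (p - 1) (κ c)) := by
  refine ⟨fun j => ?_, ?_⟩
  · unfold diagExponent
    split_ifs <;> omega
  · rw [sum_diagExponent_nsmul h, ← hu, ← succ_nsmul, Nat.sub_add_cancel hp]

theorem bijective_of_injective_umin (huinj : Injective umin)
    (hu : ∀ r, umin r = aplus a (ownVar h (κ r)) + ∑ t, aplus a (sharedVar h t)) :
    Bijective κ :=
  have hκ : Injective κ := fun r r' hr => huinj (by rw [hu, hu, hr])
  ⟨hκ, Finite.injective_iff_surjective.1 hκ⟩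

theorem injective_aplus_ownVar (huinj : Injective umin)
    (hu : ∀ r, umin r = aplus a (ownVar h (κ r)) + ∑ t, aplus a (sharedVar h t)) :
    Injective fun s => aplus a (ownVar h s) := by
  intro s s' hs
  obtain ⟨r, rfl⟩ := (bijective_of_injective_umin huinj hu).2 s
  obtain ⟨r', rfl⟩ := (bijective_of_injective_umin huinj hu).2 s'
  exact congrArg κ (huinj (by rw [hu, hu]; exact congrArg (· + _) hs))

theorem perm_eq_one_and_eq_diagExponent (hp : 0 < p) (huinj : Injective umin)
    (hu : ∀ r, umin r = aplus a (ownVar h (κ r)) + ∑ t, aplus a (sharedVar h t))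
    {σ : Equiv.Perm (Fin m)} {g : Fin m → Fin N → ℕ}
    (hsum : ∀ j, ∑ c, g c j = ∑ c, diagExponent μ (p - 1) (κ c) j)
    (hg : ∀ c, IsSupportExponent p a (umin (σ c)) (umin c) (g c)) :
    σ = 1 ∧ g = fun c => diagExponent μ (p - 1) (κ c) := by
  set q := p - 1
  have hpq : q + 1 = p := Nat.sub_add_cancel hp
  have hκ := bijective_of_injective_umin huinj hu
  have hshared : ∀ c t, g c (sharedVar h t) = q := fun c t =>
    (sum_eq_sum_iff_of_le fun c _ => (hg c).1 _).1 (by simpa using hsum (sharedVar h t)) c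
      (mem_univ c)
  have hbeyond : ∀ c (j : Fin N), μ + m ≤ (j : ℕ) → g c j = 0 := fun c j hj => by
    have hj' := hsum j
    simp only [diagExponent_of_le hj, sum_const_zero, sum_eq_zero_iff, mem_univ,
      true_implies] at hj'
    exact hj' c
  have hcol : ∀ s, ∑ c, g c (ownVar h s) = q := fun s => by
    rw [hsum, Fintype.sum_bijective κ hκ _ (fun s' => if s = s' then q else 0) (by simp)]
    simp
  have hred : ∀ c, ∑ s, g c (ownVar h s) • aplus a (ownVar h s) + aplus a (ownVar h (κ c)) =
      (q + 1) • aplus a (ownVar h (κ (σ c))) := fun c =>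
    sum_ownVar_nsmul_add_eq_succ_nsmul h _ (hshared c) (hbeyond c)
      (by rw [← hu, ← hu, hpq]; exact (hg c).2)
  have hrow : ∀ c, ∑ s, g c (ownVar h s) = q := fun c => by
    simpa using congrFun (hred c) (Fin.last (n + 1))
  have hcore := eq_and_eq_zero_of_sum_nsmul_add_eq_succ_nsmul
    (v := fun s => toLex (aplus a (ownVar h s))) (injective_aplus_ownVar huinj hu)
    (θ := κ ∘ σ) (hκ.2.comp σ.surjective) hκ.1 hrow hcol hred
  have hσ : σ = 1 := Equiv.ext fun c => (hκ.1 (hcore c).1).symm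
  subst hσ
  have hoff : ∀ c, ∀ s ≠ κ c, g c (ownVar h s) = 0 := by simpa using fun c => (hcore c).2
  refine ⟨rfl, funext fun c => funext fun j => ?_⟩
  obtain ⟨t, rfl⟩ | ⟨s, rfl⟩ | hj := sharedVar_or_ownVar_or_le h j
  · simp [hshared]
  · rw [diagExponent_ownVar]
    split_ifs with hs
    · rw [hs, ← hrow c, sum_eq_single (κ c) (fun s _ hs => hoff c s hs) (by simp)]
    · exact hoff c s hs
  · rw [hbeyond c j hj, diagExponent_of_le hj]

end Uniqueness

theorem stmt_8 (p n N : ℕ) (hp : p.Prime)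
    (a : Fin N → Fin (n + 1) → ℕ)
    (μ m : ℕ)
    (umin : Fin m → Fin (n + 2) → ℕ)
    (huinj : Function.Injective umin)
    (hNm : μ + m ≤ N)
    (κ : Fin m → Fin m)
    (hκ : ∀ r : Fin m, ∀ i : Fin (n + 2),
      umin r i = aplus a ⟨μ + (κ r : ℕ), by have := (κ r).isLt; omega⟩ i +
        ∑ t : Fin μ, aplus a ⟨(t : ℕ), by have := t.isLt; omega⟩ i)
    (M : Matrix (Fin m) (Fin m) (MvPolynomial (Fin N) (ZMod p)))
    (hM : ∀ r c : Fin m, ∀ m' : Fin N →₀ ℕ, (M r c).coeff m' =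
      if (∀ j, m' j ≤ p - 1) ∧
          (∀ i : Fin (n + 2), ∑ j, (m' j : ℤ) * (aplus a j i : ℤ) = p * umin r i - umin c i)
      then (-1) ^ (μ + 1) * (∏ j, ((m' j).factorial : ZMod p))⁻¹
      else 0) :
    M.det ≠ 0 := by
  classical
  have := Fact.mk hp
  have hu : ∀ r, umin r = aplus a (ownVar hNm (κ r)) + ∑ t, aplus a (sharedVar hNm t) :=
    fun r => funext fun i => by rw [Pi.add_apply, Finset.sum_apply]; exact hκ r i
  have hcoeff : ∀ r c (e : Fin N →₀ ℕ),
      coeff e (M r c) ≠ 0 ↔ IsSupportExponent p a (umin r) (umin c) e := by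
    intro r c e
    rw [hM, IsSupportExponent, ← forall_intCast_sum_mul_eq_sub_iff]
    split_ifs with he
    · refine iff_of_true (mul_ne_zero (by simp) (inv_ne_zero ?_)) he
      refine prod_ne_zero_iff.2 fun j _ => ?_
      exact ZMod.natCast_factorial_ne_zero hp (by have := he.1 j; have := hp.pos; omega)
    · simp [he]
  set ν : Fin m → Fin N →₀ ℕ :=
    fun c => Finsupp.equivFunOnFinite.symm (diagExponent μ (p - 1) (κ c))
  have hdet := M.coeff_det_eq_prod_of_unique ν fun σ g hg hne => by
    obtain ⟨hσ, hgν⟩ := perm_eq_one_and_eq_diagExponent hp.pos huinj hu (g := fun c => g c)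
      (fun j => by simpa [ν] using DFunLike.congr_fun hg j) (fun c => (hcoeff _ _ _).1 (hne c))
    exact ⟨hσ, funext fun c => DFunLike.coe_injective (congrFun hgν c)⟩
  intro h0
  rw [h0, coeff_zero] at hdet
  exact prod_ne_zero_iff.2 (fun c _ => (hcoeff c c _).2
    (isSupportExponent_diagExponent hp.pos hu c)) hdet.symm
end

section
/- Let 1 ≤ h ≤ n+1 and I = {0, 1, …, h−1} ⊆ S. Suppose a_1, …, a_N is an enumeration (without repetition) of all vectors b ∈ ℕ^{n+1} with Σ_{i=0}^n b_i = d. Then there exist pairwise distinct indices j_1, …, j_{μ_I} ∈ {1, …, N} and an injective map u ↦ k_u from U^I_min into {1, …, N} ∖ {j_1, …, j_{μ_I}} such that u = a^+_{k_u} + Σ_{t=1}^{μ_I} a^+_{j_t} for every u ∈ U^I_min; in particular N ≥ μ_I + |U^I_min| and Hypothesis 7.1 can be satisfied after reindexing. -/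
lemma indicator_sum (n : ℕ) (s : Finset ℕ) (hs : ∀ x ∈ s, x < n + 1) :
    (∑ i : Fin (n + 1), if (i : ℕ) ∈ s then (1 : ℕ) else 0) = s.card := by
  classical
  rw [Fin.sum_univ_eq_sum_range (fun i => if i ∈ s then (1 : ℕ) else 0)]
  rw [Finset.sum_ite_mem]
  rw [Finset.inter_eq_right.mpr (fun x hx => Finset.mem_range.mpr (hs x hx))]
  simp

lemma block_sum (m d i : ℕ) (hd0 : 0 < d) :
    (∑ t : Fin m, if i ∈ Finset.Ico ((t : ℕ) * d) ((t : ℕ) * d + d) then (1 : ℕ) else 0) =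
      if i < m * d then 1 else 0 := by
  classical
  rw [Fin.sum_univ_eq_sum_range (fun t => if i ∈ Finset.Ico (t * d) (t * d + d) then (1:ℕ) else 0)]
  have key : ∀ t ∈ Finset.range m,
      (if i ∈ Finset.Ico (t * d) (t * d + d) then (1 : ℕ) else 0)
        = if t = i / d then 1 else 0 := by
    intro t _
    congr 1
    simp only [Finset.mem_Ico, eq_iff_iff]
    constructor
    · rintro ⟨h1, h2⟩
      exact (Nat.div_eq_of_lt_le h1 (by rw [add_mul, one_mul]; exact h2)).symm
    · rintro rfl
      have h1 : d * (i / d) + i % d = i := Nat.div_add_mod i d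
      have h2 : i % d < d := Nat.mod_lt i hd0
      constructor
      · rw [mul_comm]; omega
      · rw [mul_comm]; omega
  rw [Finset.sum_congr rfl key, Finset.sum_ite_eq' (Finset.range m) (i / d) (fun _ => (1:ℕ))]
  congr 1
  simp only [Finset.mem_range, eq_iff_iff]
  exact Nat.div_lt_iff_lt_mul hd0

/-- if `a₁, …, a_N` enumerates (without repetition) all vectors
`b ∈ ℕ^{n+1}` with `∑ᵢ bᵢ = d`, and `I = {0, 1, …, h−1}` with `1 ≤ h ≤ n+1`, then there
are pairwise distinct indices `j₁, …, j_{μ_I}` and an injective map `u ↦ k_u` from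
`U^I_min` into the complement of `{j₁, …, j_{μ_I}}` with
`u = a⁺_{k_u} + ∑_t a⁺_{j_t}` for every `u ∈ U^I_min`; in particular
`N ≥ μ_I + |U^I_min|`, i.e. Hypothesis 7.1 can be satisfied after reindexing. -/
theorem stmt_9 (p n N d : ℕ) (hp : p.Prime) (hn : 1 ≤ n) (hN : 1 ≤ N) (hd : 2 ≤ d)
    (a : Fin N → Fin (n + 1) → ℕ) (ha : ∀ j, ∑ i, a j i = d)
    (hainj : Function.Injective a)
    (hasurj : ∀ b : Fin (n + 1) → ℕ, (∑ i, b i = d) → ∃ j, a j = b)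
    (h : ℕ) (hh1 : 1 ≤ h) (hh2 : h ≤ n + 1) :
    ∃ js : Fin ((h + d - 1) / d - 1) → Fin N, Function.Injective js ∧
      ∃ k : {u : Fin (n + 2) → ℕ //
          (∑ i : Fin (n + 1), u i.castSucc = d * u (Fin.last (n + 1))) ∧
          (∀ i : Fin (n + 1), (i : ℕ) < h → 0 < u i.castSucc) ∧
          u (Fin.last (n + 1)) = (h + d - 1) / d} → Fin N,
        Function.Injective k ∧
        (∀ w, ∀ t, k w ≠ js t) ∧
        (∀ w, ∀ i : Fin (n + 2),
          w.1 i = aplus a (k w) i + ∑ t, aplus a (js t) i) ∧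
        (h + d - 1) / d - 1 +
          {u : Fin (n + 2) → ℕ |
            (∑ i : Fin (n + 1), u i.castSucc = d * u (Fin.last (n + 1))) ∧
            (∀ i : Fin (n + 1), (i : ℕ) < h → 0 < u i.castSucc) ∧
            u (Fin.last (n + 1)) = (h + d - 1) / d}.ncard ≤ N := by
  classical
  have hd0 : 0 < d := by omega
  set m : ℕ := (h + d - 1) / d - 1 with hm
  have hμ1 : 1 ≤ (h + d - 1) / d := (Nat.one_le_div_iff hd0).mpr (by omega)
  have hm1 : m + 1 = (h + d - 1) / d := by omega
  have hmul : (m + 1) * d ≤ h + d - 1 := by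
    rw [hm1]; exact Nat.div_mul_le_self _ _
  have hmdh : m * d < h := by
    rw [add_mul, one_mul] at hmul
    set x := m * d
    omega
  have hmdn : m * d ≤ n := by omega
  -- the block vectors
  set b : ℕ → Fin (n + 1) → ℕ :=
    fun t i => if (i : ℕ) ∈ Finset.Ico (t * d) (t * d + d) then 1 else 0 with hbdef
  have htdn : ∀ t : Fin m, ((t : ℕ) + 1) * d ≤ m * d := by
    intro t
    exact Nat.mul_le_mul_right d t.2
  have hbsum : ∀ t : Fin m, ∑ i, b (t : ℕ) i = d := by
    intro t
    simp only [hbdef]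
    rw [indicator_sum n (Finset.Ico ((t:ℕ) * d) ((t:ℕ) * d + d))]
    · simp
    · intro x hx
      simp only [Finset.mem_Ico] at hx
      have := htdn t
      rw [add_mul, one_mul] at this
      omega
  -- choose js
  choose js hjs using fun t : Fin m => hasurj (b t) (hbsum t)
  have hjsinj : Function.Injective js := by
    intro t t' hjseq
    have hbt : b (t : ℕ) = b (t' : ℕ) := by
      rw [← hjs t, ← hjs t', hjseq]
    have htd : (t : ℕ) * d < n + 1 := by
      have := htdn t
      rw [add_mul, one_mul] at this
      omega
    have hev := congrFun hbt ⟨(t : ℕ) * d, htd⟩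
    simp only [hbdef] at hev
    simp only [Finset.mem_Ico] at hev
    rw [if_pos ⟨le_refl _, by omega⟩] at hev
    by_cases hc : (t' : ℕ) * d ≤ (t : ℕ) * d ∧ (t : ℕ) * d < (t' : ℕ) * d + d
    · have e1 : ((t : ℕ) * d) / d = (t' : ℕ) :=
        Nat.div_eq_of_lt_le hc.1 (by rw [add_mul, one_mul]; exact hc.2)
      have e2 : ((t : ℕ) * d) / d = (t : ℕ) := Nat.mul_div_cancel _ hd0
      exact Fin.ext (by omega)
    · rw [if_neg hc] at hev
      omega
  -- the indicator of {0, ..., m*d - 1}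
  set ind : Fin (n + 1) → ℕ := fun i => if (i : ℕ) < m * d then 1 else 0 with hinddef
  have hindsum : ∑ i, ind i = m * d := by
    have : ∑ i : Fin (n + 1), (if (i : ℕ) ∈ Finset.range (m * d) then (1:ℕ) else 0) =
        (Finset.range (m * d)).card := by
      apply indicator_sum
      intro x hx
      simp only [Finset.mem_range] at hx
      omega
    simpa [hinddef, Finset.mem_range] using this
  -- residual vector for each w
  set U := {u : Fin (n + 2) → ℕ //
      (∑ i : Fin (n + 1), u i.castSucc = d * u (Fin.last (n + 1))) ∧
      (∀ i : Fin (n + 1), (i : ℕ) < h → 0 < u i.castSucc) ∧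
      u (Fin.last (n + 1)) = (h + d - 1) / d} with hU
  have hlastw : ∀ w : U, w.1 (Fin.last (n + 1)) = m + 1 := by
    intro w; rw [hm1]; exact w.2.2.2
  have hindle : ∀ (w : U) (i : Fin (n + 1)), ind i ≤ w.1 i.castSucc := by
    intro w i
    simp only [hinddef]
    split_ifs with hc
    · exact w.2.2.1 i (by omega)
    · omega
  set c : U → Fin (n + 1) → ℕ := fun w i => w.1 i.castSucc - ind i with hcdef
  have hcadd : ∀ (w : U) (i : Fin (n + 1)), c w i + ind i = w.1 i.castSucc := by
    intro w i
    exact Nat.sub_add_cancel (hindle w i)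
  have hcsum : ∀ w : U, ∑ i, c w i = d := by
    intro w
    have h1 : ∑ i : Fin (n + 1), (c w i + ind i) = ∑ i : Fin (n + 1), w.1 i.castSucc :=
      Finset.sum_congr rfl (fun i _ => hcadd w i)
    rw [Finset.sum_add_distrib, hindsum] at h1
    have h2 : ∑ i : Fin (n + 1), w.1 i.castSucc = d * (m + 1) := by
      rw [w.2.1, hlastw w]
    rw [h2] at h1
    have h3 : d * (m + 1) = m * d + d := by ring
    omega
  choose k hk using fun w : U => hasurj (c w) (hcsum w)
  have hkinj : Function.Injective k := by
    intro w w' hkeq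
    have hc : c w = c w' := by rw [← hk w, ← hk w', hkeq]
    apply Subtype.ext
    funext i
    refine Fin.lastCases ?_ ?_ i
    · rw [hlastw w, hlastw w']
    · intro j
      have := congrFun hc j
      have h1 := hcadd w j
      have h2 := hcadd w' j
      rw [this] at h1
      omega
  have havoid : ∀ (w : U) (t : Fin m), k w ≠ js t := by
    intro w t hkeq
    have hc : c w = b (t : ℕ) := by rw [← hk w, ← hjs t, hkeq]
    have hi0 : m * d < n + 1 := by omega
    have hev := congrFun hc ⟨m * d, hi0⟩
    simp only [hcdef, hbdef] at hev
    simp only [Finset.mem_Ico] at hev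
    have hpos : 0 < w.1 (Fin.castSucc ⟨m * d, hi0⟩) :=
      w.2.2.1 ⟨m * d, hi0⟩ (by simpa using hmdh)
    have hnot : ¬ ((t : ℕ) * d ≤ m * d ∧ m * d < (t : ℕ) * d + d) := by
      have := htdn t
      rw [add_mul, one_mul] at this
      omega
    rw [if_neg hnot] at hev
    simp only [hinddef] at hev
    simp only [show ¬ (m * d < m * d) from lt_irrefl _, if_false] at hev
    omega
  have hFinU : Finite U := Finite.of_injective k hkinj
  have hFinj : Function.Injective (Sum.elim js k : Fin m ⊕ U → Fin N) := by
    intro x y hxy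
    match x, y with
    | Sum.inl t, Sum.inl t' => exact congrArg Sum.inl (hjsinj hxy)
    | Sum.inl t, Sum.inr w => exact absurd hxy.symm (havoid w t)
    | Sum.inr w, Sum.inl t => exact absurd hxy (havoid w t)
    | Sum.inr w, Sum.inr w' => exact congrArg Sum.inr (hkinj hxy)
  have hcard := Nat.card_le_card_of_injective _ hFinj
  rw [Nat.card_sum] at hcard
  have e1 : Nat.card (Fin m) = m := by simp
  have e2 : Nat.card (Fin N) = N := by simp
  rw [e1, e2] at hcard
  refine ⟨js, hjsinj, k, hkinj, havoid, ?_, ?_⟩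
  · -- the decomposition equation
    intro w i
    refine Fin.lastCases ?_ ?_ i
    · rw [hlastw w]
      simp only [aplus, Fin.snoc_last]
      rw [Finset.sum_const, Finset.card_univ, Fintype.card_fin, smul_eq_mul, mul_one]
      omega
    · intro j
      simp only [aplus, Fin.snoc_castSucc]
      rw [hk w]
      have hsb : ∑ t : Fin m, a (js t) j = ind j := by
        have hv : ∀ t : Fin m, a (js t) j = b (t : ℕ) j :=
          fun t => congrFun (hjs t) j
        rw [Finset.sum_congr rfl (fun t _ => hv t)]
        simp only [hbdef, hinddef]
        exact block_sum m d (j : ℕ) hd0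
      rw [hsb]
      exact (hcadd w j).symm
  · -- cardinality bound
    rw [← Nat.card_coe_set_eq]
    exact hcard
end

section
/- Assume Hypothesis 7.1 holds for the subset I ⊆ S. Let u, v ∈ U^I_min and let ν ∈ ℕ^N satisfy Σ_{j=1}^N ν_j·a_j^+ = p·u − v. Define l ∈ ℤ^N by l = ν − (p−1)·(e_1 + ⋯ + e_{μ_I}) − p·e_{μ_I+k_u} + e_{μ_I+k_v}, where e_j denotes the j-th standard basis vector of ℤ^N. Then l ∈ L_u, that is: Σ_{k=1}^N l_k·a_k^+ = 0, l_j ≤ 0 for 1 ≤ j ≤ μ_I and for j = μ_I + k_u, and l_j ≥ 0 for all other j. -/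
/-- Lemma 7.5: under Hypothesis 7.1, if `u, v ∈ U^I_min` and
`ν ∈ ℕ^N` satisfies `∑_j ν_j a_j⁺ = p·u − v`, then
`l = ν − (p−1)(e₁ + ⋯ + e_{μ_I}) − p·e_{μ_I+k_u} + e_{μ_I+k_v}` lies in `L_u`:
`∑_k l_k a_k⁺ = 0`, `l_j ≤ 0` for `j ≤ μ_I` and for `j = μ_I + k_u`, and `l_j ≥ 0`
for all other `j`.  Here `U^I_min` is enumerated by `umin : Fin m → ℕ^{n+2}`,
`u = umin r`, `v = umin c`, and Hypothesis 7.1 is encoded by `κ` and `hκ`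
(indices are 0-based, so `j ≤ μ_I` becomes `(j : ℕ) < μ`). -/
theorem stmt_10 (p n N d : ℕ) (hp : p.Prime) (hn : 1 ≤ n) (hN : 1 ≤ N) (hd : 2 ≤ d)
    (a : Fin N → Fin (n + 1) → ℕ) (ha : ∀ j, ∑ i, a j i = d)
    (I : Finset (Fin (n + 1)))
    (μ m : ℕ) (hμ : μ + 1 = (I.card + d - 1) / d)
    (umin : Fin m → Fin (n + 2) → ℕ)
    (huinj : Function.Injective umin)
    (hurange : ∀ u : Fin (n + 2) → ℕ,
      ((∑ i : Fin (n + 1), u i.castSucc = d * u (Fin.last (n + 1))) ∧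
        (∀ i ∈ I, 0 < u i.castSucc) ∧ u (Fin.last (n + 1)) = μ + 1)
      ↔ ∃ r : Fin m, umin r = u)
    (hNm : μ + m ≤ N)
    (κ : Fin m → Fin m)
    (hκ : ∀ r : Fin m, ∀ i : Fin (n + 2),
      umin r i = aplus a ⟨μ + (κ r : ℕ), by have := (κ r).isLt; omega⟩ i +
        ∑ t : Fin μ, aplus a ⟨(t : ℕ), by have := t.isLt; omega⟩ i)
    (r c : Fin m)
    (ν : Fin N → ℕ)
    (hν : ∀ i : Fin (n + 2),
      ∑ j, (ν j : ℤ) * (aplus a j i : ℤ) = p * umin r i - umin c i)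
    (l : Fin N → ℤ)
    (hl : ∀ j : Fin N, l j = (ν j : ℤ) - (if (j : ℕ) < μ then (p : ℤ) - 1 else 0)
      - (if (j : ℕ) = μ + (κ r : ℕ) then (p : ℤ) else 0)
      + (if (j : ℕ) = μ + (κ c : ℕ) then 1 else 0)) :
    (∀ i : Fin (n + 2), ∑ j, l j * (aplus a j i : ℤ) = 0) ∧
    (∀ j : Fin N, (j : ℕ) < μ → l j ≤ 0) ∧
    (∀ j : Fin N, (j : ℕ) = μ + (κ r : ℕ) → l j ≤ 0) ∧
    (∀ j : Fin N, ¬ (j : ℕ) < μ → (j : ℕ) ≠ μ + (κ r : ℕ) → 0 ≤ l j) := by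
  have hm : 0 < m := r.pos
  have hμN : μ ≤ N := by omega
  have hjrlt : μ + (κ r : ℕ) < N := by have := (κ r).isLt; omega
  have hjclt : μ + (κ c : ℕ) < N := by have := (κ c).isLt; omega
  set jr : Fin N := ⟨μ + (κ r : ℕ), hjrlt⟩ with hjr
  set jc : Fin N := ⟨μ + (κ c : ℕ), hjclt⟩ with hjc
  obtain ⟨hu1, hu2, hu3⟩ := (hurange (umin r)).mpr ⟨r, rfl⟩
  obtain ⟨hv1, hv2, hv3⟩ := (hurange (umin c)).mpr ⟨c, rfl⟩
  have hp0 : (0:ℤ) < p := by exact_mod_cast hp.pos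
  -- the key bound ν j ≤ p - 1
  have hbound : ∀ j : Fin N, ν j < p := by
    intro j
    by_contra hcon
    push_neg at hcon
    have hpt : ∀ i : Fin (n+2), (p:ℤ) * (aplus a j i) ≤ (p:ℤ) * umin r i - umin c i := by
      intro i
      rw [← hν i]
      calc (p:ℤ) * aplus a j i ≤ (ν j : ℤ) * aplus a j i := by
            have hpν : (p:ℤ) ≤ (ν j : ℤ) := by exact_mod_cast hcon
            exact mul_le_mul_of_nonneg_right hpν (by positivity)
        _ ≤ ∑ k, (ν k:ℤ) * aplus a k i :=
            Finset.single_le_sum (f := fun k : Fin N => (ν k:ℤ) * (aplus a k i : ℤ))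
              (fun k _ => by positivity) (Finset.mem_univ j)
    have hle : ∀ i : Fin (n+2), aplus a j i ≤ umin r i := by
      intro i
      have h1 := hpt i
      have h2 : (0:ℤ) ≤ umin c i := by positivity
      have h3 : (p:ℤ) * aplus a j i ≤ (p:ℤ) * umin r i := by linarith
      exact_mod_cast le_of_mul_le_mul_left h3 hp0
    have hlt : ∀ i ∈ I, a j i < umin r i.castSucc := by
      intro i hi
      have h1 := hpt i.castSucc
      have h2 : (1:ℤ) ≤ umin c i.castSucc := by exact_mod_cast hv2 i hi
      have ha' : (aplus a j i.castSucc : ℤ) = a j i := by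
        simp [aplus, Fin.snoc_castSucc]
      have h3 : (p:ℤ) * a j i < (p:ℤ) * umin r i.castSucc := by
        rw [← ha']; linarith
      exact_mod_cast lt_of_mul_lt_mul_left h3 (le_of_lt hp0)
    have hle' : ∀ i : Fin (n+1), a j i ≤ umin r i.castSucc := by
      intro i
      have := hle i.castSucc
      simpa [aplus, Fin.snoc_castSucc] using this
    have hIcard : I.card ≤ d * μ := by
      calc I.card = ∑ _i ∈ I, 1 := by simp
        _ ≤ ∑ i ∈ I, (umin r i.castSucc - a j i) :=
            Finset.sum_le_sum (fun i hi => by have := hlt i hi; omega)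
        _ ≤ ∑ i : Fin (n+1), (umin r i.castSucc - a j i) :=
            Finset.sum_le_sum_of_subset (Finset.subset_univ I)
        _ = d * μ := by
            have := Finset.sum_tsub_distrib (s := (Finset.univ : Finset (Fin (n+1))))
              (f := fun i => umin r i.castSucc) (g := fun i => a j i)
              (fun i _ => hle' i)
            rw [this, ha j, hu1, hu3, Nat.mul_succ]
            omega
    have hdiv : (μ+1) * d ≤ I.card + d - 1 := by
      rw [hμ]; exact Nat.div_mul_le_self _ _
    have e1 : (μ+1)*d = μ*d + d := by ring
    have e2 : d * μ = μ * d := Nat.mul_comm d μ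
    rw [e2] at hIcard
    rw [e1] at hdiv
    generalize μ * d = x at hIcard hdiv
    omega
  refine ⟨?_, ?_, ?_, ?_⟩
  · intro i
    have hcr : ∀ j : Fin N, ((j:ℕ) = μ + (κ r : ℕ)) = (j = jr) := fun j => by
      simp [hjr, Fin.ext_iff]
    have hcc : ∀ j : Fin N, ((j:ℕ) = μ + (κ c : ℕ)) = (j = jc) := fun j => by
      simp [hjc, Fin.ext_iff]
    have hfiltset : Finset.univ.filter (fun j : Fin N => (j:ℕ) < μ)
        = Finset.univ.map (Fin.castLEEmb hμN) := by
      ext x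
      simp only [Finset.mem_filter, Finset.mem_univ, true_and, Finset.mem_map,
        Fin.coe_castLEEmb]
      constructor
      · intro hx; exact ⟨⟨(x:ℕ), hx⟩, by simp [Fin.ext_iff]⟩
      · rintro ⟨t, rfl⟩; simpa using t.isLt
    have hfilt : ∑ j : Fin N, (if (j:ℕ) < μ then ((p:ℤ)-1) * (aplus a j i) else 0)
        = ((p:ℤ)-1) * ∑ t : Fin μ, (aplus a (Fin.castLE hμN t) i : ℤ) := by
      rw [← Finset.sum_filter, hfiltset, Finset.sum_map, Finset.mul_sum]
      simp [Fin.castLEEmb]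
    have hrz : (umin r i : ℤ) = (aplus a jr i : ℤ)
        + ∑ t : Fin μ, (aplus a (Fin.castLE hμN t) i : ℤ) := by
      exact_mod_cast congrArg (Nat.cast : ℕ → ℤ) (hκ r i)
    have hcz : (umin c i : ℤ) = (aplus a jc i : ℤ)
        + ∑ t : Fin μ, (aplus a (Fin.castLE hμN t) i : ℤ) := by
      exact_mod_cast congrArg (Nat.cast : ℕ → ℤ) (hκ c i)
    have expand : ∀ j : Fin N, l j * (aplus a j i : ℤ)
        = (ν j : ℤ) * (aplus a j i) - (if (j:ℕ) < μ then ((p:ℤ)-1) * (aplus a j i) else 0)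
          - (if (j:ℕ) = μ + (κ r : ℕ) then (p:ℤ) * (aplus a j i) else 0)
          + (if (j:ℕ) = μ + (κ c : ℕ) then ((aplus a j i : ℤ)) else 0) := by
      intro j; rw [hl j]; split_ifs <;> ring
    rw [Finset.sum_congr rfl (fun j _ => expand j)]
    simp only [Finset.sum_add_distrib, Finset.sum_sub_distrib]
    rw [hν i, hfilt]
    simp only [hcr, hcc]
    rw [Finset.sum_ite_eq' Finset.univ jr (fun j => (p:ℤ) * (aplus a j i)),
      Finset.sum_ite_eq' Finset.univ jc (fun j => ((aplus a j i : ℤ)))]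
    simp only [Finset.mem_univ, if_pos]
    rw [hrz, hcz]
    ring
  · intro j hj
    rw [hl j, if_pos hj, if_neg (by omega), if_neg (by omega)]
    have := hbound j
    omega
  · intro j hj
    rw [hl j, if_neg (by omega), if_pos hj]
    have := hbound j
    split_ifs <;> omega
  · intro j h1 h2
    rw [hl j, if_neg h1, if_neg h2]
    split_ifs <;> omega
end
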